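/- Let q > 1 be real, d an odd positive integer, χ : ℤ → ℂ a d-periodic function, and ζ a root of unity, and suppose Re(s) > 0. Then the Mellin transform identity (1/Γ(s)) ∫_0^∞ t^{s-1} G_{q,ζ}(t | χ) dt = q/(1+q)^{s-1} ∑_{m=1}^∞ (-1)^m χ(m) ζ^m/(q^m m^s) holds, where G_{q,ζ}(t|χ) = q(1+q) ∑_{m=1}^∞ (-1)^m ζ^m χ(m) q^{-m} e^{-m(1+q)t}. -/

import Mathlib

/-!
Each term of `G_{q,ζ}(t | χ)` is an exponential `e^{-m(1+q)t}`, whose Mellin transform is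
`Γ(s) / (m(1+q))^s`. Since `χ` is periodic it is bounded, and `‖ζ‖ = 1`, so the coefficients are
dominated by the geometric series `C q^{-m}`; this justifies integrating term by term.
-/

open MeasureTheory

theorem Function.Periodic.exists_norm_le {E : Type*} [SeminormedAddCommGroup E] {f : ℤ → E}
    {c : ℤ} (h : Function.Periodic f c) (hc : 0 < c) : ∃ C, ∀ n, ‖f n‖ ≤ C := by
  obtain ⟨C, hC⟩ := ((Set.finite_Ico 0 c).image f).isBounded.exists_norm_le
  refine ⟨C, fun n => ?_⟩
  obtain ⟨m, hm, hnm⟩ := h.exists_mem_Ico₀ hc n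
  exact hnm ▸ hC _ (Set.mem_image_of_mem f hm)

theorem summable_norm_neg_one_pow_mul_pow_mul_div_pow {q : ℝ} (hq : 1 < q) {ζ : ℂ}
    (hζ : ‖ζ‖ = 1) {b : ℕ → ℂ} {C : ℝ} (hb : ∀ m, ‖b m‖ ≤ C) :
    Summable fun m : ℕ => ‖(-1 : ℂ) ^ (m + 1) * ζ ^ (m + 1) * b m / (q : ℂ) ^ (m + 1)‖ := by
  have hq0 : 0 < q := one_pos.trans hq
  have hgeom : Summable fun m : ℕ => C * q⁻¹ ^ (m + 1) :=
    ((summable_nat_add_iff 1).2 (summable_geometric_of_lt_one (by positivity)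
      (inv_lt_one_of_one_lt₀ hq))).mul_left C
  refine hgeom.of_nonneg_of_le (fun _ => norm_nonneg _) fun m => ?_
  rw [norm_div, norm_mul, norm_mul, norm_pow, norm_pow, norm_pow, norm_neg, norm_one, hζ,
    one_pow, one_mul, one_mul, Complex.norm_real, Real.norm_of_nonneg hq0.le,
    div_eq_mul_inv, ← inv_pow]
  exact mul_le_mul_of_nonneg_right (hb m) (by positivity)

theorem mellin_tsum_mul_exp {c : ℕ → ℂ} (hc : Summable (‖c ·‖)) {r : ℝ} (hr : 0 < r)
    {s : ℂ} (hs : 0 < s.re) :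
    mellin (fun t : ℝ => ∑' m : ℕ, c m * Complex.exp (-((m : ℂ) + 1) * r * t)) s =
      Complex.Gamma s / (r : ℂ) ^ s * ∑' m : ℕ, c m / ((m : ℂ) + 1) ^ s := by
  have hp (m : ℕ) : 0 < ((m : ℝ) + 1) * r := by positivity
  have hF : ∀ t ∈ Set.Ioi (0 : ℝ),
      HasSum (fun m : ℕ => c m * Real.exp (-(((m : ℝ) + 1) * r) * t))
        (∑' m : ℕ, c m * Complex.exp (-((m : ℂ) + 1) * r * t)) := by
    intro t ht
    have hexp (m : ℕ) : (Real.exp (-(((m : ℝ) + 1) * r) * t) : ℂ) =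
        Complex.exp (-((m : ℂ) + 1) * r * t) := by
      push_cast
      ring_nf
    simp only [hexp]
    refine (Summable.of_norm_bounded hc fun m => ?_).hasSum
    rw [norm_mul, ← hexp, Complex.norm_real, Real.norm_of_nonneg (Real.exp_nonneg _)]
    refine mul_le_of_le_one_right (norm_nonneg _) (Real.exp_le_one_iff.2 ?_)
    nlinarith [hp m, Set.mem_Ioi.1 ht]
  have h_sum : Summable fun m : ℕ => ‖c m‖ / (((m : ℝ) + 1) * r) ^ s.re := by
    refine (hc.div_const (r ^ s.re)).of_nonneg_of_le (fun m => by positivity) fun m => ?_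
    refine div_le_div_of_nonneg_left (norm_nonneg _) (by positivity) ?_
    exact Real.rpow_le_rpow hr.le (le_mul_of_one_le_left hr.le (by simp)) hs.le
  rw [← (hasSum_mellin (fun m => Or.inr (hp m)) hs hF h_sum).tsum_eq, ← tsum_mul_left]
  congr 1 with m
  rw [Complex.ofReal_mul, Complex.mul_cpow_ofReal_nonneg (by positivity) hr.le]
  push_cast
  ring

theorem stmt4_general (q : ℝ) (hq : 1 < q) (d : ℕ) (hd0 : 0 < d)
    (χ : ℤ → ℂ) (hχ : ∀ m : ℤ, χ (m + d) = χ m)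
    (ζ : ℂ) (hζ : ∃ k : ℕ, 0 < k ∧ ζ ^ k = 1)
    (s : ℂ) (hs : 0 < s.re) :
    (1 / Complex.Gamma s) *
      ∫ t in Set.Ioi (0 : ℝ), (t : ℂ) ^ (s - 1) *
        ((q : ℂ) * (1 + q) * ∑' m : ℕ, (-1 : ℂ) ^ (m + 1) * ζ ^ (m + 1) * χ (m + 1) /
          (q : ℂ) ^ (m + 1) * Complex.exp (-((m : ℂ) + 1) * (1 + q) * t)) =
    (q : ℂ) / (1 + (q : ℂ)) ^ (s - 1) *
      ∑' m : ℕ, (-1 : ℂ) ^ (m + 1) * χ (m + 1) * ζ ^ (m + 1) /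
        ((q : ℂ) ^ (m + 1) * ((m : ℂ) + 1) ^ s) := by
  obtain ⟨C, hC⟩ := Function.Periodic.exists_norm_le (c := d) hχ (by exact_mod_cast hd0)
  obtain ⟨k, hk, hζk⟩ := hζ
  have hc := summable_norm_neg_one_pow_mul_pow_mul_div_pow hq
    (Complex.norm_eq_one_of_pow_eq_one hζk hk.ne') (fun m => hC (m + 1))
  have hmellin := mellin_tsum_mul_exp hc (by linarith : (0 : ℝ) < 1 + q) hs
  push_cast at hmellin
  have h1q : (1 : ℂ) + q ≠ 0 := by exact_mod_cast (by linarith : (1 : ℝ) + q ≠ 0)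
  change 1 / Complex.Gamma s * mellin (fun t => ((q : ℂ) * (1 + q)) • _) s = _
  rw [mellin_const_smul, hmellin, smul_eq_mul, Complex.cpow_sub _ _ h1q, Complex.cpow_one]
  field_simp [Complex.Gamma_ne_zero_of_re_pos hs]
  simp only [mul_right_comm _ (ζ ^ _) (χ _)]

/-- Mellin transform identity for the generating function of the Dirichlet-type
twisted Eulerian polynomials, for `Re s > 0`. -/
theorem stmt4 (q : ℝ) (hq : 1 < q) (d : ℕ) (hd : Odd d) (hd0 : 0 < d)
    (χ : ℤ → ℂ) (hχ : ∀ m : ℤ, χ (m + d) = χ m)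
    (ζ : ℂ) (hζ : ∃ k : ℕ, 0 < k ∧ ζ ^ k = 1)
    (s : ℂ) (hs : 0 < s.re) :
    (1 / Complex.Gamma s) *
      ∫ t in Set.Ioi (0 : ℝ), (t : ℂ) ^ (s - 1) *
        ((q : ℂ) * (1 + q) * ∑' m : ℕ, (-1 : ℂ) ^ (m + 1) * ζ ^ (m + 1) * χ (m + 1) /
          (q : ℂ) ^ (m + 1) * Complex.exp (-((m : ℂ) + 1) * (1 + q) * t)) =
    (q : ℂ) / (1 + (q : ℂ)) ^ (s - 1) *
      ∑' m : ℕ, (-1 : ℂ) ^ (m + 1) * χ (m + 1) * ζ ^ (m + 1) /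
        ((q : ℂ) ^ (m + 1) * ((m : ℂ) + 1) ^ s) :=
  stmt4_general q hq d hd0 χ hχ ζ hζ s hs
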